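/- For every integer g ≥ 1, the Harer–Zagier coefficients satisfy the handle blow-up relation 2·(6g−1)·(6g+1)·b(g, g−1) = (g+1)·b(g+1, g) − (20/3)·b(g+1, g−1). -/
import Mathlib


/-- Handle blow-up relation for Harer–Zagier coefficients: for every `g ≥ 1`,
`2(6g-1)(6g+1) b(g,g-1) = (g+1) b(g+1,g) - (20/3) b(g+1,g-1)`. -/
theorem harer_zagier_handle_blowup
    (b : ℕ → ℤ → ℚ)
    (hb1 : b 1 0 = 1)
    (hb0 : ∀ g : ℕ, 1 ≤ g → ∀ k : ℤ, (k < 0 ∨ (g : ℤ) - 1 < k) → b g k = 0)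
    (hrec : ∀ g : ℕ, 1 ≤ g → ∀ k : ℤ,
      (4 * (g : ℚ) + 2 * (k : ℚ) + 6) * b (g + 1) k =
        (4 * (g : ℚ) + 2 * (k : ℚ) + 1) * (4 * (g : ℚ) + 2 * (k : ℚ) + 3) *
          ((4 * (g : ℚ) + 2 * (k : ℚ) + 2) * b g k
            + 4 * (4 * (g : ℚ) + 2 * (k : ℚ) - 1) * b g (k - 1))) :
    ∀ g : ℕ, 1 ≤ g →
      2 * (6 * (g : ℚ) - 1) * (6 * (g : ℚ) + 1) * b g ((g : ℤ) - 1) =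
        ((g : ℚ) + 1) * b (g + 1) (g : ℤ) - (20 / 3 : ℚ) * b (g + 1) ((g : ℤ) - 1) := by
  -- key step: from the invariant at `g`, compute `b (g+1) (g-1)` and `b (g+1) g`
  have key : ∀ g : ℕ, 1 ≤ g →
      10 * (2 * (g : ℚ) - 1) * b g ((g : ℤ) - 2) = 3 * (g : ℚ) * ((g : ℚ) - 1) * b g ((g : ℤ) - 1) →
      (b (g + 1) ((g : ℤ) - 1)
          = (3 * (g : ℚ) / 5) * (6 * (g : ℚ) - 1) * (6 * (g : ℚ) + 1) * b g ((g : ℤ) - 1) ∧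
       ((g : ℚ) + 1) * b (g + 1) (g : ℤ)
          = 2 * (2 * (g : ℚ) + 1) * (6 * (g : ℚ) - 1) * (6 * (g : ℚ) + 1) * b g ((g : ℤ) - 1)) := by
    intro g hg haux
    have h1 := hrec g hg ((g : ℤ) - 1)
    have h2 := hrec g hg (g : ℤ)
    have hz : b g (g : ℤ) = 0 := hb0 g hg (g : ℤ) (Or.inr (by omega))
    have e1 : (g : ℤ) - 1 - 1 = (g : ℤ) - 2 := by ring
    rw [e1] at h1
    push_cast at h1 h2
    constructor
    · have h1' : (6 * (g : ℚ) + 4) * b (g + 1) ((g : ℤ) - 1)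
          = (6 * (g : ℚ) + 4) *
            ((3 * (g : ℚ) / 5) * (6 * (g : ℚ) - 1) * (6 * (g : ℚ) + 1) * b g ((g : ℤ) - 1)) := by
        linear_combination h1 + ((6 : ℚ) / 5) * (6 * (g : ℚ) - 1) * (6 * (g : ℚ) + 1) * haux
      exact mul_left_cancel₀ (by positivity) h1'
    · have h2' : (6 : ℚ) * (((g : ℚ) + 1) * b (g + 1) (g : ℤ))
          = (6 : ℚ) *
            (2 * (2 * (g : ℚ) + 1) * (6 * (g : ℚ) - 1) * (6 * (g : ℚ) + 1) * b g ((g : ℤ) - 1)) := by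
        linear_combination h2 + (4 * (g : ℚ) + 2 * (g : ℚ) + 1) * (4 * (g : ℚ) + 2 * (g : ℚ) + 3)
          * (4 * (g : ℚ) + 2 * (g : ℚ) + 2) * hz
      exact mul_left_cancel₀ (by norm_num) h2'
  -- the invariant, by induction
  have aux : ∀ g : ℕ, 1 ≤ g →
      10 * (2 * (g : ℚ) - 1) * b g ((g : ℤ) - 2)
        = 3 * (g : ℚ) * ((g : ℚ) - 1) * b g ((g : ℤ) - 1) := by
    intro g
    induction g with
    | zero => intro h; omega
    | succ n ih =>
      intro _
      rcases Nat.eq_zero_or_pos n with hn | hn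
      · subst hn
        have hz : b 1 (-1) = 0 := hb0 1 le_rfl (-1) (Or.inl (by norm_num))
        push_cast
        rw [hz]
        ring
      · obtain ⟨hX, hY⟩ := key n hn (ih hn)
        have e1 : ((n + 1 : ℕ) : ℤ) - 2 = (n : ℤ) - 1 := by push_cast; ring
        have e2 : ((n + 1 : ℕ) : ℤ) - 1 = (n : ℤ) := by push_cast; ring
        rw [e1, e2]
        push_cast
        linear_combination 10 * (2 * (n : ℚ) + 1) * hX - 3 * (n : ℚ) * hY
  intro g hg
  obtain ⟨hX, hY⟩ := key g hg (aux g hg)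
  linear_combination (20 / 3 : ℚ) * hX - hY
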